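/- arXiv:2108.04382 — 10 statements merged into one kernel-verified Lean document; each statement's English description precedes it below -/
import Mathlib

section
/- If X is an infinite-dimensional real Hilbert space, then the weak sequential closure of the cross C equals X × X; that is, for every (x,y) ∈ X × X there exists a sequence (xₙ,yₙ) in C converging weakly to (x,y). In particular, C is not weakly sequentially closed. -/
/-!
Choose an orthonormal sequence `eₙ` orthogonal to `x` and `y`; it exists because `span {x, y}ᗮ`
is still infinite-dimensional. Then `xₙ = x + ⟪x, y⟫ eₙ` and `yₙ = y - eₙ` lie on the cross, since
`⟪xₙ, yₙ⟫ = ⟪x, y⟫ - ⟪x, y⟫ ‖eₙ‖² = 0`, and `(xₙ, yₙ) ⇀ (x, y)` because `eₙ ⇀ 0` by Bessel's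
inequality.
-/

open RealInnerProductSpace Filter Topology

theorem exists_linearIndependent_nat_of_not_finiteDimensional {K V : Type*} [DivisionRing K]
    [AddCommGroup V] [Module K V] (hV : ¬ FiniteDimensional K V) :
    ∃ v : ℕ → V, LinearIndependent K v := by
  let b := Module.Basis.ofVectorSpace K V
  have : Infinite (Module.Basis.ofVectorSpaceIndex K V) := by
    rw [Set.infinite_coe_iff]
    intro hfin
    have := hfin.fintype
    exact hV (Module.Finite.of_basis b)
  let φ := Infinite.natEmbedding (Module.Basis.ofVectorSpaceIndex K V)
  exact ⟨b ∘ φ, b.linearIndependent.comp φ φ.injective⟩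

section

variable {𝕜 E : Type*} [RCLike 𝕜] [NormedAddCommGroup E] [InnerProductSpace 𝕜 E]

theorem exists_orthonormal_nat_of_not_finiteDimensional (hE : ¬ FiniteDimensional 𝕜 E) :
    ∃ e : ℕ → E, Orthonormal 𝕜 e := by
  obtain ⟨v, hv⟩ := exists_linearIndependent_nat_of_not_finiteDimensional hE
  exact ⟨_, InnerProductSpace.gramSchmidtNormed_orthonormal hv⟩

theorem Submodule.not_finiteDimensional_orthogonal (K : Submodule 𝕜 E) [FiniteDimensional 𝕜 K]
    (hE : ¬ FiniteDimensional 𝕜 E) : ¬ FiniteDimensional 𝕜 Kᗮ := by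
  intro hKperp
  have : FiniteDimensional 𝕜 (K ⊔ Kᗮ : Submodule 𝕜 E) := inferInstance
  rw [K.sup_orthogonal_of_hasOrthogonalProjection] at this
  exact hE Submodule.topEquiv.finiteDimensional

theorem Submodule.exists_orthonormal_nat_mem_orthogonal (K : Submodule 𝕜 E)
    [FiniteDimensional 𝕜 K] (hE : ¬ FiniteDimensional 𝕜 E) :
    ∃ e : ℕ → E, Orthonormal 𝕜 e ∧ ∀ n, e n ∈ Kᗮ := by
  obtain ⟨e, he⟩ :=
    exists_orthonormal_nat_of_not_finiteDimensional (K.not_finiteDimensional_orthogonal hE)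
  exact ⟨_, he.comp_linearIsometry Kᗮ.subtypeₗᵢ, fun n => (e n).2⟩

theorem Orthonormal.tendsto_inner_cofinite_zero {ι : Type*} {v : ι → E} (hv : Orthonormal 𝕜 v)
    (x : E) : Tendsto (fun i => inner 𝕜 (v i) x) cofinite (𝓝 0) := by
  have hsq := (hv.inner_products_summable (x := x)).tendsto_cofinite_zero
  rw [tendsto_zero_iff_norm_tendsto_zero]
  simpa using hsq.sqrt

end

theorem cross_weak_sequential_closure_eq_univ_general
    {X : Type*} [NormedAddCommGroup X] [InnerProductSpace ℝ X]
    (hX : ¬ FiniteDimensional ℝ X) (x y : X) :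
    ∃ f g : ℕ → X, (∀ n : ℕ, ⟪f n, g n⟫ = 0) ∧
      ∀ u v : X,
        Tendsto (fun n : ℕ => ⟪f n, u⟫ + ⟪g n, v⟫) atTop (nhds (⟪x, u⟫ + ⟪y, v⟫)) := by
  let K := Submodule.span ℝ ({x, y} : Set X)
  have : FiniteDimensional ℝ K := FiniteDimensional.span_of_finite ℝ (by simp)
  obtain ⟨e, he, heK⟩ := K.exists_orthonormal_nat_mem_orthogonal hX
  have hxe (n : ℕ) : ⟪x, e n⟫ = 0 :=
    Submodule.inner_right_of_mem_orthogonal (Submodule.subset_span (by simp)) (heK n)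
  have hye (n : ℕ) : ⟪e n, y⟫ = 0 :=
    Submodule.inner_left_of_mem_orthogonal (Submodule.subset_span (by simp)) (heK n)
  have hee (n : ℕ) : ⟪e n, e n⟫ = 1 := by rw [real_inner_self_eq_norm_sq, he.1 n]; norm_num
  refine ⟨fun n => x + ⟪x, y⟫ • e n, fun n => y - e n, fun n => ?_, fun u v => ?_⟩
  · simp only [inner_add_left, inner_sub_right, real_inner_smul_left, hxe, hye, hee]
    ring
  · have hw (w : X) : Tendsto (fun n => ⟪e n, w⟫) atTop (𝓝 0) :=
      Nat.cofinite_eq_atTop ▸ he.tendsto_inner_cofinite_zero w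
    simp only [inner_add_left, inner_sub_left, real_inner_smul_left]
    simpa using (tendsto_const_nhds.add ((hw u).const_mul ⟪x, y⟫)).add
      (tendsto_const_nhds.sub (hw v))

theorem cross_weak_sequential_closure_eq_univ
    {X : Type*} [NormedAddCommGroup X] [InnerProductSpace ℝ X] [CompleteSpace X]
    (hX : ¬ FiniteDimensional ℝ X) (x y : X) :
    ∃ f g : ℕ → X, (∀ n : ℕ, ⟪f n, g n⟫ = 0) ∧
      ∀ u v : X,
        Tendsto (fun n : ℕ => ⟪f n, u⟫ + ⟪g n, v⟫) atTop (nhds (⟪x, u⟫ + ⟪y, v⟫)) :=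
  cross_weak_sequential_closure_eq_univ_general hX x y
end

section
/- Let (x₀,y₀) ∈ X × X and suppose (x,y) is a nearest point to (x₀,y₀) in the cross C, i.e. (x,y) ∈ C and ‖x−x₀‖² + ‖y−y₀‖² ≤ ‖u−x₀‖² + ‖v−y₀‖² for all (u,v) ∈ C. Then there exists a closed linear subspace U of X such that x = P_U x₀ and y = P_{U^⊥} y₀, where P_U and P_{U^⊥} denote the orthogonal projections onto U and its orthogonal complement. -/
/-!
Take `U = ℝ ∙ x`. Freezing `y`, every multiple of `x` is orthogonal to `y`, so `x` is a nearest
point of `U` to `x₀`; freezing `x`, every vector of `Uᗮ` is admissible, so `y` is a nearest point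
of `Uᗮ` to `y₀`. A nearest point of a subspace is the orthogonal projection onto it, and `U`, being
finite-dimensional, is closed and complete.
-/

open RealInnerProductSpace

namespace Submodule

variable {E : Type*} [NormedAddCommGroup E] [InnerProductSpace ℝ E]

theorem starProjection_eq_of_mem_of_forall_norm_sub_le {K : Submodule ℝ E}
    [K.HasOrthogonalProjection] {u v : E} (hv : v ∈ K) (hmin : ∀ w ∈ K, ‖u - v‖ ≤ ‖u - w‖) :
    K.starProjection u = v := by
  have hinf : ‖u - v‖ = ⨅ w : (K : Set E), ‖u - w‖ :=
    le_antisymm (le_ciInf fun w ↦ hmin w w.2)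
      (ciInf_le ⟨0, Set.forall_mem_range.2 fun _ ↦ norm_nonneg _⟩ (⟨v, hv⟩ : (K : Set E)))
  exact eq_starProjection_of_mem_of_inner_eq_zero hv
    ((norm_eq_iInf_iff_real_inner_eq_zero K hv).1 hinf)

end Submodule

theorem cross_nearest_point_is_projection_pair_general
    {X : Type*} [NormedAddCommGroup X] [InnerProductSpace ℝ X]
    (x₀ y₀ x y : X) (hxy : ⟪x, y⟫ = 0)
    (hmin : ∀ u v : X, ⟪u, v⟫ = 0 →
      ‖x - x₀‖ ^ 2 + ‖y - y₀‖ ^ 2 ≤ ‖u - x₀‖ ^ 2 + ‖v - y₀‖ ^ 2) :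
    ∃ (U : Submodule ℝ X) (_ : IsClosed (U : Set X)) (_ : CompleteSpace U),
      x = (Submodule.orthogonalProjectionOnto U x₀ : X) ∧
      y = (Submodule.orthogonalProjectionOnto Uᗮ y₀ : X) := by
  have hx : ∀ u, ⟪u, y⟫ = 0 → ‖x₀ - x‖ ≤ ‖x₀ - u‖ := fun u hu ↦ by
    have := hmin u y hu
    rw [norm_sub_rev x₀, norm_sub_rev x₀]
    exact (sq_le_sq₀ (norm_nonneg _) (norm_nonneg _)).1 (by linarith)
  have hy : ∀ v, ⟪x, v⟫ = 0 → ‖y₀ - y‖ ≤ ‖y₀ - v‖ := fun v hv ↦ by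
    have := hmin x v hv
    rw [norm_sub_rev y₀, norm_sub_rev y₀]
    exact (sq_le_sq₀ (norm_nonneg _) (norm_nonneg _)).1 (by linarith)
  refine ⟨ℝ ∙ x, Submodule.closed_of_finiteDimensional _, inferInstance, ?_, ?_⟩
  · refine (Submodule.starProjection_eq_of_mem_of_forall_norm_sub_le
      (Submodule.mem_span_singleton_self x) fun w hw ↦ hx w ?_).symm
    obtain ⟨c, rfl⟩ := Submodule.mem_span_singleton.1 hw
    rw [real_inner_smul_left, hxy, mul_zero]
  · refine (Submodule.starProjection_eq_of_mem_of_forall_norm_sub_le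
      (Submodule.mem_orthogonal_singleton_iff_inner_right.2 hxy) fun w hw ↦ hy w ?_).symm
    exact Submodule.mem_orthogonal_singleton_iff_inner_right.1 hw

theorem cross_nearest_point_is_projection_pair
    {X : Type*} [NormedAddCommGroup X] [InnerProductSpace ℝ X] [CompleteSpace X]
    (x₀ y₀ x y : X) (hxy : ⟪x, y⟫ = 0)
    (hmin : ∀ u v : X, ⟪u, v⟫ = 0 →
      ‖x - x₀‖ ^ 2 + ‖y - y₀‖ ^ 2 ≤ ‖u - x₀‖ ^ 2 + ‖v - y₀‖ ^ 2) :
    ∃ (U : Submodule ℝ X) (_ : IsClosed (U : Set X)) (_ : CompleteSpace U),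
      x = (Submodule.orthogonalProjectionOnto U x₀ : X) ∧
      y = (Submodule.orthogonalProjectionOnto Uᗮ y₀ : X) :=
  cross_nearest_point_is_projection_pair_general x₀ y₀ x y hxy hmin
end

section
/- Let (x₀,y₀) ∈ X × X with ⟨x₀,y₀⟩ ≠ 0. Then (0,0) is not a nearest point to (x₀,y₀) in the cross C; that is, there exists (u,v) ∈ C with ‖u−x₀‖² + ‖v−y₀‖² < ‖x₀‖² + ‖y₀‖². -/
/-!
Keep `u = x₀` and replace `y₀` by its component `v` orthogonal to `x₀`. Then `(u, v)` lies in the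
cross and its squared distance to `(x₀, y₀)` is the squared norm of the projection of `y₀` onto
`ℝ ∙ x₀`, which is at most `‖y₀‖²`; this beats the value `‖x₀‖² + ‖y₀‖²` at the origin since
`⟪x₀, y₀⟫ ≠ 0` forces `x₀ ≠ 0`.
-/

open RealInnerProductSpace

theorem exists_inner_eq_zero_norm_sub_le {X : Type*} [NormedAddCommGroup X]
    [InnerProductSpace ℝ X] (x y : X) : ∃ v : X, ⟪x, v⟫ = 0 ∧ ‖v - y‖ ≤ ‖y‖ := by
  let K := ℝ ∙ x
  refine ⟨y - K.starProjection y, ?_, ?_⟩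
  · exact (K.sub_starProjection_mem_orthogonal y) x (Submodule.mem_span_singleton_self x)
  · rw [sub_sub_cancel_left, norm_neg]
    exact K.norm_starProjection_apply_le y

theorem cross_zero_not_nearest_general
    {X : Type*} [NormedAddCommGroup X] [InnerProductSpace ℝ X]
    (x₀ y₀ : X) (h : ⟪x₀, y₀⟫ ≠ 0) :
    ∃ u v : X, ⟪u, v⟫ = 0 ∧
      ‖u - x₀‖ ^ 2 + ‖v - y₀‖ ^ 2 < ‖x₀‖ ^ 2 + ‖y₀‖ ^ 2 := by
  have hx₀ : x₀ ≠ 0 := by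
    rintro rfl
    exact h (inner_zero_left y₀)
  obtain ⟨v, hv, hv_le⟩ := exists_inner_eq_zero_norm_sub_le x₀ y₀
  refine ⟨x₀, v, hv, ?_⟩
  calc ‖x₀ - x₀‖ ^ 2 + ‖v - y₀‖ ^ 2 ≤ ‖y₀‖ ^ 2 := by
        rw [sub_self, norm_zero, zero_pow two_ne_zero, zero_add]
        gcongr
    _ < ‖x₀‖ ^ 2 + ‖y₀‖ ^ 2 := lt_add_of_pos_left _ (pow_pos (norm_pos_iff.mpr hx₀) 2)

theorem cross_zero_not_nearest
    {X : Type*} [NormedAddCommGroup X] [InnerProductSpace ℝ X] [CompleteSpace X]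
    (x₀ y₀ : X) (h : ⟪x₀, y₀⟫ ≠ 0) :
    ∃ u v : X, ⟪u, v⟫ = 0 ∧
      ‖u - x₀‖ ^ 2 + ‖v - y₀‖ ^ 2 < ‖x₀‖ ^ 2 + ‖y₀‖ ^ 2 :=
  cross_zero_not_nearest_general x₀ y₀ h
end

section
/- Let (x₀,y₀) ∈ X × X with ⟨x₀,y₀⟩ ≠ 0, and suppose (x,y) is a nearest point to (x₀,y₀) in the cross C, i.e. (x,y) ∈ C and ‖x−x₀‖² + ‖y−y₀‖² ≤ ‖u−x₀‖² + ‖v−y₀‖² for all (u,v) ∈ C. Then (x,y) ≠ (0,0). -/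
open RealInnerProductSpace

/- The point `(x₀, 0)` lies on the cross and its squared distance to `(x₀, y₀)` is `‖y₀‖²`, whereas
the origin is at squared distance `‖x₀‖² + ‖y₀‖²`; since `⟪x₀, y₀⟫ ≠ 0` forces `x₀ ≠ 0`, the origin
cannot be a nearest point. -/

theorem cross_nearest_point_ne_zero_general
    {X : Type*} [NormedAddCommGroup X] [InnerProductSpace ℝ X]
    (x₀ y₀ x y : X) (h : ⟪x₀, y₀⟫ ≠ 0)
    (hmin : ∀ u v : X, ⟪u, v⟫ = 0 →
      ‖x - x₀‖ ^ 2 + ‖y - y₀‖ ^ 2 ≤ ‖u - x₀‖ ^ 2 + ‖v - y₀‖ ^ 2) :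
    (x, y) ≠ ((0 : X), (0 : X)) := by
  rintro ⟨rfl, rfl⟩
  have hx₀ : x₀ ≠ 0 := by
    rintro rfl
    exact h (inner_zero_left y₀)
  have hcloser := hmin x₀ 0 (inner_zero_right x₀)
  simp only [zero_sub, norm_neg, sub_self, norm_zero] at hcloser
  have : 0 < ‖x₀‖ := norm_pos_iff.mpr hx₀
  nlinarith

theorem cross_nearest_point_ne_zero
    {X : Type*} [NormedAddCommGroup X] [InnerProductSpace ℝ X] [CompleteSpace X]
    (x₀ y₀ x y : X) (h : ⟪x₀, y₀⟫ ≠ 0) (hxy : ⟪x, y⟫ = 0)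
    (hmin : ∀ u v : X, ⟪u, v⟫ = 0 →
      ‖x - x₀‖ ^ 2 + ‖y - y₀‖ ^ 2 ≤ ‖u - x₀‖ ^ 2 + ‖v - y₀‖ ^ 2) :
    (x, y) ≠ ((0 : X), (0 : X)) :=
  cross_nearest_point_ne_zero_general x₀ y₀ x y h hmin
end

section
/- Let X be a finite-dimensional real Hilbert space, let (x₀,y₀) ∈ X × X with ⟨x₀,y₀⟩ ≠ 0, and suppose (x,y) is a nearest point to (x₀,y₀) in the cross C, i.e. (x,y) ∈ C and ‖x−x₀‖² + ‖y−y₀‖² ≤ ‖u−x₀‖² + ‖v−y₀‖² for all (u,v) ∈ C. Then there exists a unique λ ∈ ℝ such that x + λ·y = x₀ and y + λ·x = y₀. -/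
/-!
A nearest point `(x, y)` of the cross is a critical point of `‖u - x₀‖² + ‖v - y₀‖²` along every
line through `(x, y)` that stays in the cross. Moving `x` orthogonally to `y` shows
`x - x₀ ∈ ℝ ∙ y`, and symmetrically `y - y₀ ∈ ℝ ∙ x`; write `x₀ = x - a • y`, `y₀ = y - b • x`.
The line `t ↦ (x + t‖x‖² • y, y - t‖y‖² • x)` also stays in the cross, and criticality along it
gives `(a - b) ‖x‖² ‖y‖² = 0`, so a common multiplier exists. It is unique because
`⟪x₀, y₀⟫ ≠ 0` rules out `x = y = 0`.
-/

open RealInnerProductSpace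

theorem eq_zero_of_forall_mul_add_mul_sq_nonneg {a b : ℝ} (h : ∀ t : ℝ, 0 ≤ a * t + b * t ^ 2) :
    a = 0 := by
  have hs : 0 < |b| + 1 := by positivity
  have key : (a * (-a / (|b| + 1)) + b * (-a / (|b| + 1)) ^ 2) * (|b| + 1) ^ 2
      = a ^ 2 * (b - |b| - 1) := by
    field_simp
    ring
  nlinarith [mul_nonneg (h (-a / (|b| + 1))) (sq_nonneg (|b| + 1)), le_abs_self b, sq_nonneg a]

section

variable {X : Type*} [NormedAddCommGroup X] [InnerProductSpace ℝ X]

theorem inner_add_inner_eq_zero_of_forall_le {z₁ z₂ w₁ w₂ : X}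
    (h : ∀ t : ℝ, ‖z₁‖ ^ 2 + ‖z₂‖ ^ 2 ≤ ‖z₁ + t • w₁‖ ^ 2 + ‖z₂ + t • w₂‖ ^ 2) :
    ⟪z₁, w₁⟫ + ⟪z₂, w₂⟫ = 0 := by
  suffices 2 * (⟪z₁, w₁⟫ + ⟪z₂, w₂⟫) = 0 by linarith
  refine eq_zero_of_forall_mul_add_mul_sq_nonneg (b := ‖w₁‖ ^ 2 + ‖w₂‖ ^ 2) fun t ↦ ?_
  have := h t
  simp only [norm_add_sq_real, real_inner_smul_right, norm_smul, mul_pow, Real.norm_eq_abs,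
    sq_abs] at this
  linarith

theorem mem_span_singleton_of_forall_inner_eq_zero {v w : X}
    (h : ∀ u : X, ⟪u, v⟫ = 0 → ⟪w, u⟫ = 0) : w ∈ ℝ ∙ v := by
  rw [← Submodule.orthogonal_orthogonal (ℝ ∙ v), Submodule.mem_orthogonal']
  exact fun u hu ↦ h u (Submodule.mem_orthogonal_singleton_iff_inner_left.mp hu)

theorem inner_add_smul_add_smul_eq_zero {x y : X} (hxy : ⟪x, y⟫ = 0) (t : ℝ) :
    ⟪x + t • (‖x‖ ^ 2 • y), y + t • (-‖y‖ ^ 2 • x)⟫ = 0 := by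
  simp only [inner_add_left, inner_add_right, real_inner_smul_left, real_inner_smul_right, hxy,
    real_inner_comm x y, real_inner_self_eq_norm_sq]
  ring

def IsNearestCrossPoint (x₀ y₀ x y : X) : Prop :=
  ⟪x, y⟫ = 0 ∧ ∀ u v : X, ⟪u, v⟫ = 0 →
    ‖x - x₀‖ ^ 2 + ‖y - y₀‖ ^ 2 ≤ ‖u - x₀‖ ^ 2 + ‖v - y₀‖ ^ 2

namespace IsNearestCrossPoint

variable {x₀ y₀ x y : X}

theorem swap (h : IsNearestCrossPoint x₀ y₀ x y) : IsNearestCrossPoint y₀ x₀ y x :=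
  ⟨real_inner_comm x y ▸ h.1, fun u v huv ↦ by
    rw [add_comm, add_comm (‖u - y₀‖ ^ 2)]
    exact h.2 v u (real_inner_comm u v ▸ huv)⟩

theorem inner_add_inner_eq_zero (h : IsNearestCrossPoint x₀ y₀ x y) {w₁ w₂ : X}
    (hC : ∀ t : ℝ, ⟪x + t • w₁, y + t • w₂⟫ = 0) : ⟪x - x₀, w₁⟫ + ⟪y - y₀, w₂⟫ = 0 :=
  inner_add_inner_eq_zero_of_forall_le fun t ↦ by
    simpa only [add_sub_right_comm] using h.2 _ _ (hC t)

theorem sub_mem_span_left (h : IsNearestCrossPoint x₀ y₀ x y) : x - x₀ ∈ ℝ ∙ y :=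
  mem_span_singleton_of_forall_inner_eq_zero fun w hw ↦ by
    simpa only [inner_zero_right, add_zero] using
      h.inner_add_inner_eq_zero (w₂ := 0) fun t ↦ by
        simp [inner_add_left, real_inner_smul_left, h.1, hw]

theorem exists_add_smul_eq (h : IsNearestCrossPoint x₀ y₀ x y) :
    ∃ lam : ℝ, x + lam • y = x₀ ∧ y + lam • x = y₀ := by
  obtain ⟨a, ha⟩ := Submodule.mem_span_singleton.mp h.sub_mem_span_left
  obtain ⟨b, hb⟩ := Submodule.mem_span_singleton.mp h.swap.sub_mem_span_left
  have hab : (a - b) * (‖x‖ ^ 2 * ‖y‖ ^ 2) = 0 := by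
    have := h.inner_add_inner_eq_zero (inner_add_smul_add_smul_eq_zero h.1)
    rw [← ha, ← hb, real_inner_smul_left, real_inner_smul_right, real_inner_smul_left,
      real_inner_smul_right, real_inner_self_eq_norm_sq, real_inner_self_eq_norm_sq] at this
    linarith
  obtain rfl | rfl | rfl : a = b ∨ x = 0 ∨ y = 0 := by simpa [sub_eq_zero] using hab
  · exact ⟨-a, by linear_combination (norm := module) -ha,
      by linear_combination (norm := module) -hb⟩
  · exact ⟨-a, by linear_combination (norm := module) -ha,
      by linear_combination (norm := module) -hb⟩
  · exact ⟨-b, by linear_combination (norm := module) -ha,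
      by linear_combination (norm := module) -hb⟩

end IsNearestCrossPoint

end

theorem cross_nearest_point_lagrange_multiplier_general
    {X : Type*} [NormedAddCommGroup X] [InnerProductSpace ℝ X]
    (x₀ y₀ x y : X) (h : ⟪x₀, y₀⟫ ≠ 0) (hxy : ⟪x, y⟫ = 0)
    (hmin : ∀ u v : X, ⟪u, v⟫ = 0 →
      ‖x - x₀‖ ^ 2 + ‖y - y₀‖ ^ 2 ≤ ‖u - x₀‖ ^ 2 + ‖v - y₀‖ ^ 2) :
    ∃! lam : ℝ, x + lam • y = x₀ ∧ y + lam • x = y₀ := by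
  refine existsUnique_of_exists_of_unique (IsNearestCrossPoint.exists_add_smul_eq ⟨hxy, hmin⟩)
    fun l m ⟨hl₁, hl₂⟩ ⟨hm₁, hm₂⟩ ↦ ?_
  by_cases hy : y = 0
  · by_cases hx : x = 0
    · exact absurd (by simp [← hl₁, hx, hy]) h
    · exact smul_left_injective ℝ hx (add_left_cancel (hl₂.trans hm₂.symm))
  · exact smul_left_injective ℝ hy (add_left_cancel (hl₁.trans hm₁.symm))

theorem cross_nearest_point_lagrange_multiplier
    {X : Type*} [NormedAddCommGroup X] [InnerProductSpace ℝ X] [FiniteDimensional ℝ X]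
    (x₀ y₀ x y : X) (h : ⟪x₀, y₀⟫ ≠ 0) (hxy : ⟪x, y⟫ = 0)
    (hmin : ∀ u v : X, ⟪u, v⟫ = 0 →
      ‖x - x₀‖ ^ 2 + ‖y - y₀‖ ^ 2 ≤ ‖u - x₀‖ ^ 2 + ‖v - y₀‖ ^ 2) :
    ∃! lam : ℝ, x + lam • y = x₀ ∧ y + lam • x = y₀ :=
  cross_nearest_point_lagrange_multiplier_general x₀ y₀ x y h hxy hmin
end

section
/- Let X be a finite-dimensional real Hilbert space, let (x₀,y₀) ∈ X × X with ⟨x₀,y₀⟩ ≠ 0, x₀ ≠ y₀ and x₀ ≠ −y₀, and suppose (x,y) is a nearest point to (x₀,y₀) in the cross C, i.e. (x,y) ∈ C and ‖x−x₀‖² + ‖y−y₀‖² ≤ ‖u−x₀‖² + ‖v−y₀‖² for all (u,v) ∈ C. Then there exists a unique λ ∈ ℝ with λ ≠ 1 and λ ≠ −1 such that x + λ·y = x₀, y + λ·x = y₀, x = (1/(1−λ²))·(x₀ − λ·y₀), and y = (1/(1−λ²))·(y₀ − λ·x₀). -/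
/-!
Perturbing a nearest point `(x, y)` of the cross inside the cross gives first-order conditions.
Moving only `x` within `yᗮ` shows `x₀ - x ⊥ yᗮ`, so `x₀ = x + c₁ y`; symmetrically `y₀ = y + c₂ x`.
The rotation `(x + t‖x‖² y, y - t‖y‖² x)` stays in the cross and yields `‖x‖²‖y‖²(c₁ - c₂) = 0`,
so one multiplier serves both equations. The rest is linear algebra: `λ = ±1` would force
`x₀ = ±y₀`, and `1 - λ²` can be inverted.
-/

open RealInnerProductSpace

lemma eq_zero_of_forall_nonneg_mul_sq_add_mul {a b : ℝ} (h : ∀ t : ℝ, 0 ≤ a * t ^ 2 + b * t) :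
    b = 0 := by
  have hd : discrim a b 0 ≤ 0 := discrim_le_zero fun t ↦ by simpa [sq] using h t
  rw [discrim, mul_zero, sub_zero] at hd
  exact (pow_eq_zero_iff two_ne_zero).mp (le_antisymm hd (sq_nonneg b))

lemma inner_add_inner_eq_zero_of_forall_le_s12 {E : Type*} [NormedAddCommGroup E]
    [InnerProductSpace ℝ E] {a₁ a₂ d₁ d₂ : E}
    (h : ∀ t : ℝ, ‖a₁‖ ^ 2 + ‖a₂‖ ^ 2 ≤ ‖a₁ + t • d₁‖ ^ 2 + ‖a₂ + t • d₂‖ ^ 2) :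
    ⟪a₁, d₁⟫ + ⟪a₂, d₂⟫ = 0 := by
  have expand (a d : E) (t : ℝ) :
      ‖a + t • d‖ ^ 2 = ‖a‖ ^ 2 + 2 * t * ⟪a, d⟫ + t ^ 2 * ‖d‖ ^ 2 := by
    rw [norm_add_sq_real, real_inner_smul_right, norm_smul, mul_pow, Real.norm_eq_abs, sq_abs]
    ring
  have := eq_zero_of_forall_nonneg_mul_sq_add_mul (a := ‖d₁‖ ^ 2 + ‖d₂‖ ^ 2)
    (b := 2 * (⟪a₁, d₁⟫ + ⟪a₂, d₂⟫)) fun t ↦ by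
      linarith [h t, expand a₁ d₁ t, expand a₂ d₂ t]
  linarith

section Multiplier

variable {K V : Type*} [Field K] [AddCommGroup V] [Module K V] {x₀ y₀ x y : V} {lam : K}

lemma one_sub_sq_smul_eq_of_add_smul_eq (h₁ : x + lam • y = x₀) (h₂ : y + lam • x = y₀) :
    (1 - lam ^ 2) • x = x₀ - lam • y₀ := by
  rw [← h₁, ← h₂]
  module

lemma existsUnique_multiplier (hx₀ : x₀ ≠ 0) (hne : x₀ ≠ y₀) (hne' : x₀ ≠ -y₀)
    (h₁ : x + lam • y = x₀) (h₂ : y + lam • x = y₀) :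
    ∃! lam : K, lam ≠ 1 ∧ lam ≠ -1 ∧
      x + lam • y = x₀ ∧ y + lam • x = y₀ ∧
      x = (1 / (1 - lam ^ 2)) • (x₀ - lam • y₀) ∧
      y = (1 / (1 - lam ^ 2)) • (y₀ - lam • x₀) := by
  have hlam₁ : lam ≠ 1 := by
    rintro rfl
    exact hne (by rw [← h₁, ← h₂, one_smul, one_smul, add_comm])
  have hlam₂ : lam ≠ -1 := by
    rintro rfl
    exact hne' (by rw [← h₁, ← h₂]; module)
  have hden : (1 : K) - lam ^ 2 ≠ 0 := by
    rw [sub_ne_zero, ne_comm, sq_ne_one_iff]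
    exact ⟨hlam₁, hlam₂⟩
  refine ⟨lam, ⟨hlam₁, hlam₂, h₁, h₂, ?_, ?_⟩, ?_⟩
  · rw [← one_sub_sq_smul_eq_of_add_smul_eq h₁ h₂, smul_smul, one_div_mul_cancel hden, one_smul]
  · rw [← one_sub_sq_smul_eq_of_add_smul_eq h₂ h₁, smul_smul, one_div_mul_cancel hden, one_smul]
  rintro l ⟨-, -, h₁', h₂', -⟩
  have hxy : x ≠ 0 ∨ y ≠ 0 := by
    by_contra! h
    exact hx₀ (by rw [← h₁, h.1, h.2, smul_zero, add_zero])
  rcases hxy with hx | hy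
  · exact smul_left_injective K hx (add_left_cancel (h₂'.trans h₂.symm))
  · exact smul_left_injective K hy (add_left_cancel (h₁'.trans h₁.symm))

end Multiplier

section Cross

variable {E : Type*} [NormedAddCommGroup E] [InnerProductSpace ℝ E]

def IsNearestOnCross (x₀ y₀ x y : E) : Prop :=
  ⟪x, y⟫ = 0 ∧
    ∀ u v : E, ⟪u, v⟫ = 0 → ‖x - x₀‖ ^ 2 + ‖y - y₀‖ ^ 2 ≤ ‖u - x₀‖ ^ 2 + ‖v - y₀‖ ^ 2

namespace IsNearestOnCross

variable {x₀ y₀ x y : E}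

lemma symm (hp : IsNearestOnCross x₀ y₀ x y) : IsNearestOnCross y₀ x₀ y x :=
  ⟨real_inner_comm x y ▸ hp.1, fun u v huv ↦ by
    simpa only [add_comm] using hp.2 v u (real_inner_comm u v ▸ huv)⟩

lemma inner_add_inner_eq_zero {dx dy : E} (hp : IsNearestOnCross x₀ y₀ x y)
    (hd : ∀ t : ℝ, ⟪x + t • dx, y + t • dy⟫ = 0) : ⟪x - x₀, dx⟫ + ⟪y - y₀, dy⟫ = 0 :=
  inner_add_inner_eq_zero_of_forall_le_s12 fun t ↦ by
    simpa only [sub_add_eq_add_sub] using hp.2 _ _ (hd t)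

lemma sub_mem_span_singleton (hp : IsNearestOnCross x₀ y₀ x y) : x₀ - x ∈ ℝ ∙ y := by
  rw [← (ℝ ∙ y).orthogonal_orthogonal, ← neg_sub]
  refine Submodule.neg_mem _ fun z hz ↦ ?_
  rw [Submodule.mem_orthogonal_singleton_iff_inner_left] at hz
  have := hp.inner_add_inner_eq_zero (dx := z) (dy := 0) fun t ↦ by
    rw [smul_zero, add_zero, inner_add_left, hp.1, real_inner_smul_left, hz, mul_zero, add_zero]
  rwa [inner_zero_right, add_zero, real_inner_comm] at this

lemma exists_multiplier (hp : IsNearestOnCross x₀ y₀ x y) :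
    ∃ lam : ℝ, x + lam • y = x₀ ∧ y + lam • x = y₀ := by
  obtain ⟨c₁, hc₁⟩ := Submodule.mem_span_singleton.mp hp.sub_mem_span_singleton
  obtain ⟨c₂, hc₂⟩ := Submodule.mem_span_singleton.mp hp.symm.sub_mem_span_singleton
  rw [eq_sub_iff_add_eq'] at hc₁ hc₂
  have hrot : ‖x‖ ^ 2 * ‖y‖ ^ 2 * (c₁ - c₂) = 0 := by
    have := hp.inner_add_inner_eq_zero (dx := ‖x‖ ^ 2 • y) (dy := -(‖y‖ ^ 2 • x)) fun t ↦ by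
      simp only [inner_add_left, inner_add_right, real_inner_smul_left, real_inner_smul_right,
        inner_neg_right, hp.1, real_inner_comm x y, real_inner_self_eq_norm_sq]
      ring
    rw [← hc₁, ← hc₂] at this
    simp only [sub_add_cancel_left, inner_neg_left, inner_neg_right, real_inner_smul_left,
      real_inner_smul_right, real_inner_self_eq_norm_sq] at this
    linear_combination -this
  rcases mul_eq_zero.mp hrot with hxy | hc
  · rcases mul_eq_zero.mp hxy with hx | hy
    · rw [pow_eq_zero_iff two_ne_zero, norm_eq_zero] at hx
      subst hx
      exact ⟨c₁, hc₁, by simpa using hc₂⟩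
    · rw [pow_eq_zero_iff two_ne_zero, norm_eq_zero] at hy
      subst hy
      exact ⟨c₂, by simpa using hc₁, hc₂⟩
  · exact ⟨c₁, hc₁, sub_eq_zero.mp hc ▸ hc₂⟩

end IsNearestOnCross

end Cross

theorem cross_nearest_point_unique_multiplier_general
    {X : Type*} [NormedAddCommGroup X] [InnerProductSpace ℝ X]
    (x₀ y₀ x y : X) (h : ⟪x₀, y₀⟫ ≠ 0) (hne : x₀ ≠ y₀) (hne' : x₀ ≠ -y₀)
    (hxy : ⟪x, y⟫ = 0)
    (hmin : ∀ u v : X, ⟪u, v⟫ = 0 →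
      ‖x - x₀‖ ^ 2 + ‖y - y₀‖ ^ 2 ≤ ‖u - x₀‖ ^ 2 + ‖v - y₀‖ ^ 2) :
    ∃! lam : ℝ, lam ≠ 1 ∧ lam ≠ -1 ∧
      x + lam • y = x₀ ∧ y + lam • x = y₀ ∧
      x = (1 / (1 - lam ^ 2)) • (x₀ - lam • y₀) ∧
      y = (1 / (1 - lam ^ 2)) • (y₀ - lam • x₀) := by
  obtain ⟨lam, h₁, h₂⟩ := IsNearestOnCross.exists_multiplier ⟨hxy, hmin⟩
  have hx₀ : x₀ ≠ 0 := by
    rintro rfl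
    exact h (inner_zero_left y₀)
  exact existsUnique_multiplier hx₀ hne hne' h₁ h₂

theorem cross_nearest_point_unique_multiplier
    {X : Type*} [NormedAddCommGroup X] [InnerProductSpace ℝ X] [FiniteDimensional ℝ X]
    (x₀ y₀ x y : X) (h : ⟪x₀, y₀⟫ ≠ 0) (hne : x₀ ≠ y₀) (hne' : x₀ ≠ -y₀)
    (hxy : ⟪x, y⟫ = 0)
    (hmin : ∀ u v : X, ⟪u, v⟫ = 0 →
      ‖x - x₀‖ ^ 2 + ‖y - y₀‖ ^ 2 ≤ ‖u - x₀‖ ^ 2 + ‖v - y₀‖ ^ 2) :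
    ∃! lam : ℝ, lam ≠ 1 ∧ lam ≠ -1 ∧
      x + lam • y = x₀ ∧ y + lam • x = y₀ ∧
      x = (1 / (1 - lam ^ 2)) • (x₀ - lam • y₀) ∧
      y = (1 / (1 - lam ^ 2)) • (y₀ - lam • x₀) :=
  cross_nearest_point_unique_multiplier_general x₀ y₀ x y h hne hne' hxy hmin
end

section
/- Let (x₀,y₀) ∈ X × X, let λ ∈ ℝ with λ ≠ 1 and λ ≠ −1, and set x := (1/(1−λ²))·(x₀ − λ·y₀) and y := (1/(1−λ²))·(y₀ − λ·x₀). If ⟨x,y⟩ = 0, then (1/2)‖x−x₀‖² + (1/2)‖y−y₀‖² = (1/2)·λ·⟨x₀,y₀⟩. -/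
/-!
The definitions of `x` and `y` invert to `x₀ = x + λ y` and `y₀ = y + λ x`.
Hence `x - x₀ = -λ y` and `y - y₀ = -λ x`, so the left side is `λ² (‖x‖² + ‖y‖²) / 2`,
while `⟪x₀, y₀⟫ = λ (‖x‖² + ‖y‖²)` once `⟪x, y⟫ = 0`.
-/

open RealInnerProductSpace

lemma one_sub_sq_ne_zero {R : Type*} [CommRing R] [NoZeroDivisors R] {a : R}
    (h1 : a ≠ 1) (h2 : a ≠ -1) : 1 - a ^ 2 ≠ 0 := by
  rw [sub_ne_zero, ne_comm, Ne, sq_eq_one_iff]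
  exact not_or.mpr ⟨h1, h2⟩

lemma add_smul_eq_of_eq_one_div_one_sub_sq_smul {K E : Type*} [Field K] [AddCommGroup E]
    [Module K E] {x₀ y₀ x y : E} {a : K} (ha : 1 - a ^ 2 ≠ 0)
    (hx : x = (1 / (1 - a ^ 2)) • (x₀ - a • y₀))
    (hy : y = (1 / (1 - a ^ 2)) • (y₀ - a • x₀)) :
    x + a • y = x₀ :=
  calc x + a • y = (1 / (1 - a ^ 2)) • ((1 - a ^ 2) • x₀) := by rw [hx, hy]; module
    _ = x₀ := by rw [smul_smul, one_div_mul_cancel ha, one_smul]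

lemma norm_sub_add_smul_sq_add_norm_sub_add_smul_sq_of_inner_eq_zero {X : Type*}
    [NormedAddCommGroup X] [InnerProductSpace ℝ X] (x y : X) (a : ℝ) (hxy : ⟪x, y⟫ = 0) :
    ‖x - (x + a • y)‖ ^ 2 + ‖y - (y + a • x)‖ ^ 2 = a * ⟪x + a • y, y + a • x⟫ := by
  have hyx : ⟪y, x⟫ = 0 := by rwa [real_inner_comm]
  simp only [sub_add_cancel_left, norm_neg, norm_smul, mul_pow, Real.norm_eq_abs, sq_abs,
    inner_add_left, inner_add_right, inner_smul_left, inner_smul_right, hxy, hyx,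
    real_inner_self_eq_norm_sq, RCLike.conj_to_real]
  ring

theorem cross_objective_value_of_orthogonal
    {X : Type*} [NormedAddCommGroup X] [InnerProductSpace ℝ X]
    (x₀ y₀ : X) (lam : ℝ) (hl1 : lam ≠ 1) (hl2 : lam ≠ -1)
    (x y : X)
    (hx : x = (1 / (1 - lam ^ 2)) • (x₀ - lam • y₀))
    (hy : y = (1 / (1 - lam ^ 2)) • (y₀ - lam • x₀))
    (hxy : ⟪x, y⟫ = 0) :
    (1 / 2) * ‖x - x₀‖ ^ 2 + (1 / 2) * ‖y - y₀‖ ^ 2 = (1 / 2) * lam * ⟪x₀, y₀⟫ := by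
  have hne := one_sub_sq_ne_zero hl1 hl2
  rw [← add_smul_eq_of_eq_one_div_one_sub_sq_smul hne hx hy,
    ← add_smul_eq_of_eq_one_div_one_sub_sq_smul hne hy hx, mul_assoc,
    ← norm_sub_add_smul_sq_add_norm_sub_add_smul_sq_of_inner_eq_zero x y lam hxy]
  ring
end

section
/- Let (x₀,y₀) ∈ X × X and let U be a closed linear subspace of X, with orthogonal projections P_U onto U and P_{U^⊥} onto its orthogonal complement. Then (‖x₀‖² + ‖y₀‖² − ‖x₀+y₀‖·‖x₀−y₀‖)/4 ≤ (1/2)‖P_U x₀ − x₀‖² + (1/2)‖P_{U^⊥} y₀ − y₀‖². -/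
/-!
With `R = P_U - P_{U^⊥}` the reflection in `U`, one has `⟪x, R x⟫ = ‖x‖² - 2‖P_U x - x‖²`, and
`⟪y, R y⟫ = -(‖y‖² - 2‖P_{U^⊥} y - y‖²)` since `U^⊥` gives the reflection `-R`. An involutive
isometry is self-adjoint, so `⟪x, R x⟫ - ⟪y, R y⟫ = ⟪x + y, R (x - y)⟫ ≤ ‖x + y‖ ‖x - y‖` by
Cauchy–Schwarz.
-/

open RealInnerProductSpace

theorem LinearIsometryEquiv.real_inner_self_sub_le_of_involutive
    {E : Type*} [NormedAddCommGroup E] [InnerProductSpace ℝ E]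
    (R : E ≃ₗᵢ[ℝ] E) (hR : Function.Involutive R) (x y : E) :
    ⟪x, R x⟫ - ⟪y, R y⟫ ≤ ‖x + y‖ * ‖x - y‖ := by
  have hsymm : ⟪y, R x⟫ = ⟪x, R y⟫ := by
    rw [← R.inner_map_map, hR, real_inner_comm]
  calc ⟪x, R x⟫ - ⟪y, R y⟫ = ⟪x + y, R (x - y)⟫ := by
        simp only [map_sub, inner_add_left, inner_sub_right]
        linarith
    _ ≤ ‖x + y‖ * ‖R (x - y)‖ := real_inner_le_norm _ _
    _ = ‖x + y‖ * ‖x - y‖ := by rw [R.norm_map]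

namespace Submodule

variable {E : Type*} [NormedAddCommGroup E] [InnerProductSpace ℝ E]
  (K : Submodule ℝ E) [K.HasOrthogonalProjection]

theorem real_inner_self_reflection (x : E) :
    ⟪x, K.reflection x⟫ = ‖x‖ ^ 2 - 2 * ‖K.starProjection x - x‖ ^ 2 := by
  have hPx : ⟪K.starProjection x, x⟫ = ‖K.starProjection x‖ ^ 2 :=
    K.re_inner_starProjection_eq_normSq x
  rw [reflection_apply, inner_sub_right, two_nsmul, inner_add_right, norm_sub_sq_real,
    real_inner_comm, hPx, real_inner_self_eq_norm_sq]
  ring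

end Submodule

theorem cross_distance_lower_bound_projection_general
    {X : Type*} [NormedAddCommGroup X] [InnerProductSpace ℝ X]
    (x₀ y₀ : X) (U : Submodule ℝ X)
    [CompleteSpace U] :
    (‖x₀‖ ^ 2 + ‖y₀‖ ^ 2 - ‖x₀ + y₀‖ * ‖x₀ - y₀‖) / 4 ≤
      (1 / 2) * ‖(U.orthogonalProjection x₀ : X) - x₀‖ ^ 2 +
      (1 / 2) * ‖(Uᗮ.orthogonalProjection y₀ : X) - y₀‖ ^ 2 := by
  have hx := U.real_inner_self_reflection x₀
  have hy := Uᗮ.real_inner_self_reflection y₀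
  rw [Submodule.reflection_orthogonal_apply, inner_neg_right] at hy
  have key := U.reflection.real_inner_self_sub_le_of_involutive U.reflection_involutive x₀ y₀
  change _ ≤ 1 / 2 * ‖U.starProjection x₀ - x₀‖ ^ 2 + 1 / 2 * ‖Uᗮ.starProjection y₀ - y₀‖ ^ 2
  linarith

theorem cross_distance_lower_bound_projection
    {X : Type*} [NormedAddCommGroup X] [InnerProductSpace ℝ X] [CompleteSpace X]
    (x₀ y₀ : X) (U : Submodule ℝ X) (hU : IsClosed (U : Set X))
    [CompleteSpace U] :
    (‖x₀‖ ^ 2 + ‖y₀‖ ^ 2 - ‖x₀ + y₀‖ * ‖x₀ - y₀‖) / 4 ≤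
      (1 / 2) * ‖(U.orthogonalProjection x₀ : X) - x₀‖ ^ 2 +
      (1 / 2) * ‖(Uᗮ.orthogonalProjection y₀ : X) - y₀‖ ^ 2 :=
  cross_distance_lower_bound_projection_general x₀ y₀ U
end

section
/- Let (x₀,y₀) ∈ X × X with ⟨x₀,y₀⟩ ≠ 0, x₀ ≠ y₀ and x₀ ≠ −y₀, and set λ := (‖x₀‖² + ‖y₀‖² − ‖x₀+y₀‖·‖x₀−y₀‖)/(2⟨x₀,y₀⟩). Then λ ≠ 1 and λ ≠ −1, the point (x,y) := (1/(1−λ²))·(x₀ − λ·y₀, y₀ − λ·x₀) is the unique nearest point to (x₀,y₀) in the cross C (i.e. (x,y) ∈ C, ‖x−x₀‖² + ‖y−y₀‖² ≤ ‖u−x₀‖² + ‖v−y₀‖² for all (u,v) ∈ C, and any (u,v) ∈ C attaining equality equals (x,y)), and the squared distance satisfies ‖x−x₀‖² + ‖y−y₀‖² = λ·⟨x₀,y₀⟩ = (‖x₀‖² + ‖y₀‖² − ‖x₀+y₀‖·‖x₀−y₀‖)/2. -/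
/-!
If `⟪x, y⟫ = 0` and `|t| < 1`, the point `(x, y)` is the unique nearest point of the cross to
`(x + t • y, y + t • x)`: for `(u, v)` in the cross the squared distance to `(x + t • y, y + t • x)`
equals `‖u - x‖² + ‖v - y‖² + 2 t ⟪u - x, v - y⟫ + t² (‖x‖² + ‖y‖²)`, and the quadratic form
`‖p‖² + ‖q‖² + 2 t ⟪p, q⟫` is bounded below by `(1 - |t|) (‖p‖² + ‖q‖²)`.
So it suffices to write `(x₀, y₀)` in this form. Solving `x₀ = x + λ y`, `y₀ = y + λ x` gives the
stated `(x, y)`, and `⟪x, y⟫ = 0` becomes `⟪x₀, y₀⟫ λ² - (‖x₀‖² + ‖y₀‖²) λ + ⟪x₀, y₀⟫ = 0`, whose roots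
have product `1`; the given `λ` is the root of smaller modulus.
-/

open RealInnerProductSpace

section Scalar

variable {s c P t : ℝ}

lemma mul_sq_add_eq_of_eq_sub_div (hc : c ≠ 0) (hP : P ^ 2 = s ^ 2 - 4 * c ^ 2)
    (ht : t = (s - P) / (2 * c)) : c * t ^ 2 + c = s * t := by
  have h2c : t * (2 * c) = s - P := by rw [ht]; field_simp
  refine mul_left_cancel₀ (mul_ne_zero (four_ne_zero' ℝ) hc) ?_
  linear_combination (t * (2 * c) + s - P - 2 * s) * h2c + hP

lemma sq_lt_one_of_eq_sub_div (hc : c ≠ 0) (hP₀ : 0 < P) (hs : 0 ≤ s)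
    (hP : P ^ 2 = s ^ 2 - 4 * c ^ 2) (ht : t = (s - P) / (2 * c)) : t ^ 2 < 1 := by
  have h2c : t * (2 * c) = s - P := by rw [ht]; field_simp
  have hc2 : 0 < c ^ 2 := by positivity
  have hPs : P < s := by nlinarith
  have key : 4 * c ^ 2 * (t ^ 2 - 1) = 2 * P * (P - s) := by
    linear_combination h2c * (t * (2 * c) + s - P) - hP
  nlinarith

end Scalar

section Vector

variable {X : Type*} [NormedAddCommGroup X] [InnerProductSpace ℝ X]

lemma norm_add_mul_norm_sub_sq (x y : X) :
    (‖x + y‖ * ‖x - y‖) ^ 2 = (‖x‖ ^ 2 + ‖y‖ ^ 2) ^ 2 - 4 * ⟪x, y⟫ ^ 2 := by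
  rw [mul_pow, norm_add_sq_real, norm_sub_sq_real]
  ring

lemma inner_add_smul_add_smul (x y : X) (t : ℝ) :
    ⟪x + t • y, y + t • x⟫ = (1 + t ^ 2) * ⟪x, y⟫ + t * (‖x‖ ^ 2 + ‖y‖ ^ 2) := by
  simp only [inner_add_left, inner_add_right, real_inner_smul_left, real_inner_smul_right,
    real_inner_self_eq_norm_sq, real_inner_comm x y]
  ring

lemma eq_add_smul_of_eq_smul_sub {x y x₀ y₀ : X} {t : ℝ} (ht : 1 - t ^ 2 ≠ 0)
    (hx : x = (1 / (1 - t ^ 2)) • (x₀ - t • y₀)) (hy : y = (1 / (1 - t ^ 2)) • (y₀ - t • x₀)) :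
    x₀ = x + t • y ∧ y₀ = y + t • x := by
  constructor <;>
  · rw [hx, hy]
    match_scalars <;> field_simp <;> ring

lemma one_sub_abs_mul_le (p q : X) (t : ℝ) :
    (1 - |t|) * (‖p‖ ^ 2 + ‖q‖ ^ 2) ≤ ‖p‖ ^ 2 + ‖q‖ ^ 2 + 2 * t * ⟪p, q⟫ := by
  have hinner : |t * ⟪p, q⟫| ≤ |t| * (‖p‖ * ‖q‖) := by
    rw [abs_mul]
    exact mul_le_mul_of_nonneg_left (abs_real_inner_le_norm p q) (abs_nonneg t)
  have hamgm : 2 * (|t| * (‖p‖ * ‖q‖)) ≤ |t| * (‖p‖ ^ 2 + ‖q‖ ^ 2) := by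
    nlinarith [mul_nonneg (abs_nonneg t) (sq_nonneg (‖p‖ - ‖q‖))]
  linarith [neg_abs_le (t * ⟪p, q⟫)]

lemma norm_sub_add_smul_sq_add_norm_sub_add_smul_sq {x y u v : X} (t : ℝ)
    (huv : ⟪u, v⟫ = ⟪x, y⟫) :
    ‖u - (x + t • y)‖ ^ 2 + ‖v - (y + t • x)‖ ^ 2 =
      ‖u - x‖ ^ 2 + ‖v - y‖ ^ 2 + 2 * t * ⟪u - x, v - y⟫ + t ^ 2 * (‖x‖ ^ 2 + ‖y‖ ^ 2) := by
  rw [sub_add_eq_sub_sub, sub_add_eq_sub_sub, norm_sub_sq_real (u - x), norm_sub_sq_real (v - y),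
    norm_smul, norm_smul, mul_pow, mul_pow, Real.norm_eq_abs, sq_abs]
  simp only [inner_sub_left, inner_sub_right, real_inner_smul_right]
  linear_combination -2 * t * huv - 2 * t * real_inner_comm x v + 2 * t * real_inner_comm x y

variable {x y x₀ y₀ : X} {t : ℝ}

lemma norm_sub_sq_add_norm_sub_sq_eq (hx₀ : x₀ = x + t • y) (hy₀ : y₀ = y + t • x) :
    ‖x - x₀‖ ^ 2 + ‖y - y₀‖ ^ 2 = t ^ 2 * (‖x‖ ^ 2 + ‖y‖ ^ 2) := by
  simpa [hx₀, hy₀] using norm_sub_add_smul_sq_add_norm_sub_add_smul_sq (x := x) (y := y) t rfl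

lemma norm_sub_sq_add_norm_sub_sq_add_le (hx₀ : x₀ = x + t • y) (hy₀ : y₀ = y + t • x)
    {u v : X} (huv : ⟪u, v⟫ = ⟪x, y⟫) :
    ‖x - x₀‖ ^ 2 + ‖y - y₀‖ ^ 2 + (1 - |t|) * (‖u - x‖ ^ 2 + ‖v - y‖ ^ 2) ≤
      ‖u - x₀‖ ^ 2 + ‖v - y₀‖ ^ 2 := by
  rw [norm_sub_sq_add_norm_sub_sq_eq hx₀ hy₀, hx₀, hy₀,
    norm_sub_add_smul_sq_add_norm_sub_add_smul_sq t huv]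
  linarith [one_sub_abs_mul_le (u - x) (v - y) t]

lemma norm_sub_sq_add_norm_sub_sq_le (ht : |t| < 1) (hx₀ : x₀ = x + t • y)
    (hy₀ : y₀ = y + t • x) {u v : X} (huv : ⟪u, v⟫ = ⟪x, y⟫) :
    ‖x - x₀‖ ^ 2 + ‖y - y₀‖ ^ 2 ≤ ‖u - x₀‖ ^ 2 + ‖v - y₀‖ ^ 2 := by
  have := norm_sub_sq_add_norm_sub_sq_add_le hx₀ hy₀ huv
  have : 0 ≤ (1 - |t|) * (‖u - x‖ ^ 2 + ‖v - y‖ ^ 2) := by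
    apply mul_nonneg <;> [linarith; positivity]
  linarith

lemma eq_of_norm_sub_sq_add_norm_sub_sq_eq (ht : |t| < 1) (hx₀ : x₀ = x + t • y)
    (hy₀ : y₀ = y + t • x) {u v : X} (huv : ⟪u, v⟫ = ⟪x, y⟫)
    (heq : ‖u - x₀‖ ^ 2 + ‖v - y₀‖ ^ 2 = ‖x - x₀‖ ^ 2 + ‖y - y₀‖ ^ 2) :
    u = x ∧ v = y := by
  have hle := norm_sub_sq_add_norm_sub_sq_add_le hx₀ hy₀ huv
  have hsum : ‖u - x‖ ^ 2 + ‖v - y‖ ^ 2 ≤ 0 :=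
    nonpos_of_mul_nonpos_right (a := 1 - |t|) (by linarith) (by linarith)
  have hu : ‖u - x‖ ^ 2 = 0 := by linarith [sq_nonneg ‖u - x‖, sq_nonneg ‖v - y‖]
  have hv : ‖v - y‖ ^ 2 = 0 := by linarith [sq_nonneg ‖u - x‖, sq_nonneg ‖v - y‖]
  simp only [sq_eq_zero_iff, norm_eq_zero, sub_eq_zero] at hu hv
  exact ⟨hu, hv⟩

end Vector

theorem cross_projection_formula_generic_case_general
    {X : Type*} [NormedAddCommGroup X] [InnerProductSpace ℝ X]
    (x₀ y₀ : X) (h : ⟪x₀, y₀⟫ ≠ 0) (hne : x₀ ≠ y₀) (hne' : x₀ ≠ -y₀)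
    (lam : ℝ)
    (hlam : lam = (‖x₀‖ ^ 2 + ‖y₀‖ ^ 2 - ‖x₀ + y₀‖ * ‖x₀ - y₀‖) / (2 * ⟪x₀, y₀⟫))
    (x y : X)
    (hx : x = (1 / (1 - lam ^ 2)) • (x₀ - lam • y₀))
    (hy : y = (1 / (1 - lam ^ 2)) • (y₀ - lam • x₀)) :
    lam ≠ 1 ∧ lam ≠ -1 ∧
    ⟪x, y⟫ = 0 ∧
    (∀ u v : X, ⟪u, v⟫ = 0 →
      ‖x - x₀‖ ^ 2 + ‖y - y₀‖ ^ 2 ≤ ‖u - x₀‖ ^ 2 + ‖v - y₀‖ ^ 2) ∧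
    (∀ u v : X, ⟪u, v⟫ = 0 →
      ‖u - x₀‖ ^ 2 + ‖v - y₀‖ ^ 2 = ‖x - x₀‖ ^ 2 + ‖y - y₀‖ ^ 2 →
        u = x ∧ v = y) ∧
    ‖x - x₀‖ ^ 2 + ‖y - y₀‖ ^ 2 = lam * ⟪x₀, y₀⟫ ∧
    ‖x - x₀‖ ^ 2 + ‖y - y₀‖ ^ 2 =
      (‖x₀‖ ^ 2 + ‖y₀‖ ^ 2 - ‖x₀ + y₀‖ * ‖x₀ - y₀‖) / 2 := by
  have hP₀ : 0 < ‖x₀ + y₀‖ * ‖x₀ - y₀‖ := mul_pos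
    (norm_pos_iff.2 fun h₀ ↦ hne' (eq_neg_of_add_eq_zero_left h₀))
    (norm_pos_iff.2 (sub_ne_zero.2 hne))
  have hP := norm_add_mul_norm_sub_sq x₀ y₀
  have hlt : lam ^ 2 < 1 := sq_lt_one_of_eq_sub_div h hP₀ (by positivity) hP hlam
  have habs : |lam| < 1 := (sq_lt_one_iff_abs_lt_one lam).1 hlt
  obtain ⟨hx₀, hy₀⟩ := eq_add_smul_of_eq_smul_sub (by linarith) hx hy
  have hxy : ⟪x, y⟫ = 0 := by
    have hroot := mul_sq_add_eq_of_eq_sub_div h hP hlam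
    have hcross := inner_add_smul_add_smul x₀ y₀ (-lam)
    simp only [neg_smul, ← sub_eq_add_neg, neg_sq] at hcross
    rw [hx, hy, real_inner_smul_left, real_inner_smul_right, hcross]
    linear_combination (1 / (1 - lam ^ 2)) ^ 2 * hroot
  have hdist : ‖x - x₀‖ ^ 2 + ‖y - y₀‖ ^ 2 = lam * ⟪x₀, y₀⟫ := by
    rw [norm_sub_sq_add_norm_sub_sq_eq hx₀ hy₀, hx₀, hy₀, inner_add_smul_add_smul, hxy]
    ring
  refine ⟨fun h₁ ↦ by simp [h₁] at hlt, fun h₁ ↦ by simp [h₁] at hlt, hxy,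
    fun u v huv ↦ norm_sub_sq_add_norm_sub_sq_le habs hx₀ hy₀ (huv.trans hxy.symm),
    fun u v huv ↦ eq_of_norm_sub_sq_add_norm_sub_sq_eq habs hx₀ hy₀ (huv.trans hxy.symm),
    hdist, ?_⟩
  rw [hdist, hlam]
  field_simp

theorem cross_projection_formula_generic_case
    {X : Type*} [NormedAddCommGroup X] [InnerProductSpace ℝ X] [CompleteSpace X]
    (x₀ y₀ : X) (h : ⟪x₀, y₀⟫ ≠ 0) (hne : x₀ ≠ y₀) (hne' : x₀ ≠ -y₀)
    (lam : ℝ)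
    (hlam : lam = (‖x₀‖ ^ 2 + ‖y₀‖ ^ 2 - ‖x₀ + y₀‖ * ‖x₀ - y₀‖) / (2 * ⟪x₀, y₀⟫))
    (x y : X)
    (hx : x = (1 / (1 - lam ^ 2)) • (x₀ - lam • y₀))
    (hy : y = (1 / (1 - lam ^ 2)) • (y₀ - lam • x₀)) :
    lam ≠ 1 ∧ lam ≠ -1 ∧
    ⟪x, y⟫ = 0 ∧
    (∀ u v : X, ⟪u, v⟫ = 0 →
      ‖x - x₀‖ ^ 2 + ‖y - y₀‖ ^ 2 ≤ ‖u - x₀‖ ^ 2 + ‖v - y₀‖ ^ 2) ∧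
    (∀ u v : X, ⟪u, v⟫ = 0 →
      ‖u - x₀‖ ^ 2 + ‖v - y₀‖ ^ 2 = ‖x - x₀‖ ^ 2 + ‖y - y₀‖ ^ 2 →
        u = x ∧ v = y) ∧
    ‖x - x₀‖ ^ 2 + ‖y - y₀‖ ^ 2 = lam * ⟪x₀, y₀⟫ ∧
    ‖x - x₀‖ ^ 2 + ‖y - y₀‖ ^ 2 =
      (‖x₀‖ ^ 2 + ‖y₀‖ ^ 2 - ‖x₀ + y₀‖ * ‖x₀ - y₀‖) / 2 :=
  cross_projection_formula_generic_case_general x₀ y₀ h hne hne' lam hlam x y hx hy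
end

section
/- Let (x₀,y₀) ∈ X × X with x₀ = y₀ or x₀ = −y₀. Then the set of nearest points to (x₀,y₀) in the cross C (those (x,y) ∈ C with ‖x−x₀‖² + ‖y−y₀‖² ≤ ‖u−x₀‖² + ‖v−y₀‖² for all (u,v) ∈ C) equals the union over all closed linear subspaces U of X of the singletons {(P_U x₀, P_{U^⊥} y₀)}, and also equals {(0,y₀)} ∪ { (⟨u,x₀⟩·u, y₀ − ⟨u,y₀⟩·u) : u ∈ X, ‖u‖ = 1 }; moreover every such nearest point (x,y) satisfies ‖x−x₀‖² + ‖y−y₀‖² = (‖x₀‖² + ‖y₀‖²)/2. -/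
/-!
Write `y₀ = ε • x₀` with `ε = ±1`. For `(x, y)` on the cross, `⟪x, y⟫ = 0` makes the mixed terms
cancel in
`‖x - x₀‖² + ‖y - ε • x₀‖² = ‖x + ε • y - x₀‖² + ‖x₀‖²`,
so the nearest points are exactly the points of the cross with `x + ε • y = x₀`, all at squared
distance `‖x₀‖² = (‖x₀‖² + ‖y₀‖²) / 2`. Such a decomposition of `x₀` into orthogonal parts is
the same thing as projecting onto `U = ℝ ∙ x` and `Uᗮ`, and `ℝ ∙ x` is spanned by a unit vector
unless `x = 0`.
-/

open RealInnerProductSpace Submodule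

section Cross

variable {X : Type*} [NormedAddCommGroup X] [InnerProductSpace ℝ X] {ε : ℝ}

def IsCrossNearest (x₀ y₀ : X) (p : X × X) : Prop :=
  ⟪p.1, p.2⟫ = 0 ∧
    ∀ u v : X, ⟪u, v⟫ = 0 → ‖p.1 - x₀‖ ^ 2 + ‖p.2 - y₀‖ ^ 2 ≤ ‖u - x₀‖ ^ 2 + ‖v - y₀‖ ^ 2

lemma starProjection_orthogonal_unit_singleton {u : X} (hu : ‖u‖ = 1) (w : X) :
    (ℝ ∙ u)ᗮ.starProjection w = w - ⟪u, w⟫ • u := by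
  rw [starProjection_orthogonal_val, starProjection_unit_singleton ℝ hu]

lemma norm_sub_sq_add_norm_sub_smul_sq_of_inner_eq_zero (hε : ε * ε = 1) {x y : X}
    (hxy : ⟪x, y⟫ = 0) (x₀ : X) :
    ‖x - x₀‖ ^ 2 + ‖y - ε • x₀‖ ^ 2 = ‖x + ε • y - x₀‖ ^ 2 + ‖x₀‖ ^ 2 := by
  simp only [← real_inner_self_eq_norm_sq, inner_sub_left, inner_sub_right, inner_add_left,
    inner_add_right, real_inner_smul_left, real_inner_smul_right, real_inner_comm x y] at hxy ⊢
  linear_combination (⟪x₀, x₀⟫ - ⟪y, y⟫) * hε - 2 * ε * hxy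

lemma isCrossNearest_smul_iff (hε : ε * ε = 1) {x₀ : X} {p : X × X} :
    IsCrossNearest x₀ (ε • x₀) p ↔ ⟪p.1, p.2⟫ = 0 ∧ p.1 + ε • p.2 = x₀ := by
  obtain ⟨x, y⟩ := p
  refine and_congr_right fun hxy => ?_
  simp only [norm_sub_sq_add_norm_sub_smul_sq_of_inner_eq_zero hε hxy]
  constructor
  · intro hmin
    have h0 := hmin 0 (ε • x₀) (inner_zero_left _)
    rw [norm_sub_sq_add_norm_sub_smul_sq_of_inner_eq_zero hε (inner_zero_left _), zero_add,
      smul_smul, hε, one_smul, sub_self, norm_zero] at h0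
    have : ‖x + ε • y - x₀‖ ^ 2 = 0 := le_antisymm (by linarith) (sq_nonneg _)
    simpa [sub_eq_zero] using this
  · intro hx u v huv
    rw [norm_sub_sq_add_norm_sub_smul_sq_of_inner_eq_zero hε huv, hx, sub_self, norm_zero]
    nlinarith [sq_nonneg ‖u + ε • v - x₀‖]

lemma isCrossNearest_starProjection (hε : ε * ε = 1) (x₀ : X) (K : Submodule ℝ X)
    [K.HasOrthogonalProjection] :
    IsCrossNearest x₀ (ε • x₀) (K.starProjection x₀, Kᗮ.starProjection (ε • x₀)) := by
  refine (isCrossNearest_smul_iff hε).2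
    ⟨inner_right_of_mem_orthogonal (K.starProjection_apply_mem x₀)
      (Kᗮ.starProjection_apply_mem _), ?_⟩
  rw [map_smul, smul_smul, hε, one_smul, starProjection_add_starProjection_orthogonal]

lemma IsCrossNearest.eq_starProjection (hε : ε * ε = 1) {x₀ : X} {p : X × X}
    (hp : IsCrossNearest x₀ (ε • x₀) p) (K : Submodule ℝ X) [K.HasOrthogonalProjection]
    (h₁ : p.1 ∈ K) (h₂ : p.2 ∈ Kᗮ) :
    p = (K.starProjection x₀, Kᗮ.starProjection (ε • x₀)) := by
  obtain ⟨x, y⟩ := p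
  obtain ⟨-, hx⟩ : ⟪x, y⟫ = 0 ∧ x + ε • y = x₀ := (isCrossNearest_smul_iff hε).1 hp
  have hproj : K.starProjection x₀ = x :=
    eq_starProjection_of_mem_orthogonal' h₁ (Kᗮ.smul_mem ε h₂) hx.symm
  rw [starProjection_orthogonal_val, map_smul, hproj, ← hx, smul_add, smul_smul, hε, one_smul,
    add_sub_cancel_left]

lemma setOf_isCrossNearest_eq_starProjection (hε : ε * ε = 1) (x₀ : X) :
    {p | IsCrossNearest x₀ (ε • x₀) p} =
      {p | ∃ (U : Submodule ℝ X) (_ : IsClosed (U : Set X)) (_ : CompleteSpace U),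
        p = (U.starProjection x₀, Uᗮ.starProjection (ε • x₀))} := by
  ext p
  constructor
  · intro hp
    refine ⟨ℝ ∙ p.1, closed_of_finiteDimensional _, inferInstance,
      hp.eq_starProjection hε _ (mem_span_singleton_self _) ?_⟩
    exact mem_orthogonal_singleton_iff_inner_right.2 hp.1
  · rintro ⟨U, -, _, rfl⟩
    exact isCrossNearest_starProjection hε x₀ U

lemma setOf_isCrossNearest_eq_insert_unit (hε : ε * ε = 1) (x₀ : X) :
    {p | IsCrossNearest x₀ (ε • x₀) p} =
      insert (0, ε • x₀) {p | ∃ u : X, ‖u‖ = 1 ∧ p = (⟪u, x₀⟫ • u, ε • x₀ - ⟪u, ε • x₀⟫ • u)} := by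
  ext p
  constructor
  · obtain ⟨x, y⟩ := p
    intro (hp : IsCrossNearest x₀ (ε • x₀) (x, y))
    obtain ⟨hxy, hx⟩ := (isCrossNearest_smul_iff hε).1 hp
    rcases eq_or_ne x 0 with rfl | hx0
    · left
      rw [← hx, zero_add, smul_smul, hε, one_smul]
    · right
      set u := ‖x‖⁻¹ • x
      have hu : ‖u‖ = 1 := norm_smul_inv_norm hx0
      refine ⟨u, hu, ?_⟩
      have hxu : x ∈ ℝ ∙ u :=
        mem_span_singleton.2 ⟨‖x‖, smul_inv_smul₀ (norm_ne_zero_iff.2 hx0) x⟩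
      have hyu : y ∈ (ℝ ∙ u)ᗮ := by
        rw [mem_orthogonal_singleton_iff_inner_right, real_inner_smul_left, hxy, mul_zero]
      rw [hp.eq_starProjection hε _ hxu hyu, starProjection_unit_singleton ℝ hu,
        starProjection_orthogonal_unit_singleton hu]
  · rintro (rfl | ⟨u, hu, rfl⟩)
    · exact (isCrossNearest_smul_iff hε).2 ⟨inner_zero_left _, by rw [zero_add, smul_smul, hε,
        one_smul]⟩
    · have := isCrossNearest_starProjection hε x₀ (ℝ ∙ u)
      rwa [starProjection_unit_singleton ℝ hu, starProjection_orthogonal_unit_singleton hu] at this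

lemma IsCrossNearest.dist_sq_eq (hε : ε * ε = 1) {x₀ : X} {p : X × X}
    (hp : IsCrossNearest x₀ (ε • x₀) p) :
    ‖p.1 - x₀‖ ^ 2 + ‖p.2 - ε • x₀‖ ^ 2 = (‖x₀‖ ^ 2 + ‖ε • x₀‖ ^ 2) / 2 := by
  obtain ⟨hxy, hx⟩ := (isCrossNearest_smul_iff hε).1 hp
  rw [norm_sub_sq_add_norm_sub_smul_sq_of_inner_eq_zero hε hxy, hx, sub_self, norm_zero,
    norm_smul, mul_pow, Real.norm_eq_abs, sq_abs, sq ε, hε]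
  ring

end Cross

theorem cross_projection_multivalued_case_general
    {X : Type*} [NormedAddCommGroup X] [InnerProductSpace ℝ X]
    (x₀ y₀ : X) (h : x₀ = y₀ ∨ x₀ = -y₀) :
    ({p : X × X | ⟪p.1, p.2⟫ = 0 ∧
        ∀ u v : X, ⟪u, v⟫ = 0 →
          ‖p.1 - x₀‖ ^ 2 + ‖p.2 - y₀‖ ^ 2 ≤ ‖u - x₀‖ ^ 2 + ‖v - y₀‖ ^ 2} =
      {p : X × X | ∃ (U : Submodule ℝ X) (_ : IsClosed (U : Set X))
          (_ : CompleteSpace U),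
        p = ((Submodule.orthogonalProjection U x₀ : X), (Submodule.orthogonalProjection Uᗮ y₀ : X))}) ∧
    ({p : X × X | ⟪p.1, p.2⟫ = 0 ∧
        ∀ u v : X, ⟪u, v⟫ = 0 →
          ‖p.1 - x₀‖ ^ 2 + ‖p.2 - y₀‖ ^ 2 ≤ ‖u - x₀‖ ^ 2 + ‖v - y₀‖ ^ 2} =
      insert ((0 : X), y₀)
        {p : X × X | ∃ u : X, ‖u‖ = 1 ∧
          p = (⟪u, x₀⟫ • u, y₀ - ⟪u, y₀⟫ • u)}) ∧
    (∀ x y : X, ⟪x, y⟫ = 0 →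
      (∀ u v : X, ⟪u, v⟫ = 0 →
        ‖x - x₀‖ ^ 2 + ‖y - y₀‖ ^ 2 ≤ ‖u - x₀‖ ^ 2 + ‖v - y₀‖ ^ 2) →
      ‖x - x₀‖ ^ 2 + ‖y - y₀‖ ^ 2 = (‖x₀‖ ^ 2 + ‖y₀‖ ^ 2) / 2) := by
  obtain ⟨ε, hε, rfl⟩ : ∃ ε : ℝ, ε * ε = 1 ∧ y₀ = ε • x₀ := by
    rcases h with rfl | rfl
    · exact ⟨1, one_mul 1, (one_smul ℝ _).symm⟩
    · exact ⟨-1, by norm_num, by rw [neg_one_smul, neg_neg]⟩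
  refine ⟨setOf_isCrossNearest_eq_starProjection hε x₀, setOf_isCrossNearest_eq_insert_unit hε x₀,
    fun x y hxy hmin => IsCrossNearest.dist_sq_eq hε (p := (x, y)) ⟨hxy, hmin⟩⟩

theorem cross_projection_multivalued_case
    {X : Type*} [NormedAddCommGroup X] [InnerProductSpace ℝ X] [CompleteSpace X]
    (x₀ y₀ : X) (h : x₀ = y₀ ∨ x₀ = -y₀) :
    ({p : X × X | ⟪p.1, p.2⟫ = 0 ∧
        ∀ u v : X, ⟪u, v⟫ = 0 →
          ‖p.1 - x₀‖ ^ 2 + ‖p.2 - y₀‖ ^ 2 ≤ ‖u - x₀‖ ^ 2 + ‖v - y₀‖ ^ 2} =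
      {p : X × X | ∃ (U : Submodule ℝ X) (_ : IsClosed (U : Set X))
          (_ : CompleteSpace U),
        p = ((Submodule.orthogonalProjection U x₀ : X), (Submodule.orthogonalProjection Uᗮ y₀ : X))}) ∧
    ({p : X × X | ⟪p.1, p.2⟫ = 0 ∧
        ∀ u v : X, ⟪u, v⟫ = 0 →
          ‖p.1 - x₀‖ ^ 2 + ‖p.2 - y₀‖ ^ 2 ≤ ‖u - x₀‖ ^ 2 + ‖v - y₀‖ ^ 2} =
      insert ((0 : X), y₀)
        {p : X × X | ∃ u : X, ‖u‖ = 1 ∧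
          p = (⟪u, x₀⟫ • u, y₀ - ⟪u, y₀⟫ • u)}) ∧
    (∀ x y : X, ⟪x, y⟫ = 0 →
      (∀ u v : X, ⟪u, v⟫ = 0 →
        ‖x - x₀‖ ^ 2 + ‖y - y₀‖ ^ 2 ≤ ‖u - x₀‖ ^ 2 + ‖v - y₀‖ ^ 2) →
      ‖x - x₀‖ ^ 2 + ‖y - y₀‖ ^ 2 = (‖x₀‖ ^ 2 + ‖y₀‖ ^ 2) / 2) :=
  cross_projection_multivalued_case_general x₀ y₀ h
end
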